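/- arXiv:2411.13130 — 3 statements merged into one kernel-verified Lean document; each statement's English description precedes it below -/
import Mathlib

section
/- Let I : [0,∞) → ℝ be differentiable with I(0) > 0 and I'(t) ≥ 0 for all t ≥ 0. If S : [0,∞) → ℝ is differentiable, nonnegative, and satisfies S'(t) ≤ -β S(t) I(t) for all t with β > 0, then S(t) → 0 as t → ∞. -/
open Filter

theorem susceptible_tendsto_zero_of_nondecreasing_infectious
    (β : ℝ) (hβ : 0 < β)
    (I S : ℝ → ℝ)
    (hIdiff : ∀ t ≥ (0:ℝ), DifferentiableAt ℝ I t)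
    (hI0 : 0 < I 0)
    (hI' : ∀ t ≥ (0:ℝ), 0 ≤ deriv I t)
    (hSdiff : ∀ t ≥ (0:ℝ), DifferentiableAt ℝ S t)
    (hSnonneg : ∀ t ≥ (0:ℝ), 0 ≤ S t)
    (hS' : ∀ t ≥ (0:ℝ), deriv S t ≤ -β * S t * I t) :
    Tendsto S atTop (nhds 0) := by
  set c : ℝ := β * I 0 with hc
  have hcpos : 0 < c := mul_pos hβ hI0
  -- I is monotone on [0, ∞)
  have hImono : MonotoneOn I (Set.Ici 0) := by
    apply monotoneOn_of_deriv_nonneg (convex_Ici 0)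
    · exact fun t ht => (hIdiff t ht).continuousAt.continuousWithinAt
    · intro t ht
      rw [interior_Ici] at ht
      exact ((hIdiff t ht.le).differentiableWithinAt)
    · intro t ht
      rw [interior_Ici] at ht
      exact hI' t ht.le
  have hIge : ∀ t ≥ (0:ℝ), I 0 ≤ I t := fun t ht =>
    hImono (Set.self_mem_Ici) ht ht
  -- g(t) = S(t) * exp(c t) is antitone on [0,∞)
  set g : ℝ → ℝ := fun t => S t * Real.exp (c * t) with hg
  have hexp : ∀ t : ℝ, HasDerivAt (fun s => Real.exp (c * s)) (c * Real.exp (c * t)) t := by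
    intro t
    have := ((hasDerivAt_id t).const_mul c).exp
    simpa [mul_comm] using this
  have hgderiv : ∀ t ≥ (0:ℝ), HasDerivAt g
      (deriv S t * Real.exp (c * t) + S t * (c * Real.exp (c * t))) t := by
    intro t ht
    exact ((hSdiff t ht).hasDerivAt).mul (hexp t)
  have hganti : AntitoneOn g (Set.Ici 0) := by
    apply antitoneOn_of_deriv_nonpos (convex_Ici 0)
    · intro t ht
      exact (((hSdiff t ht).mul ((hexp t).differentiableAt)).continuousAt).continuousWithinAt
    · intro t ht
      rw [interior_Ici] at ht
      exact ((hSdiff t ht.le).mul ((hexp t).differentiableAt)).differentiableWithinAt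
    · intro t ht
      rw [interior_Ici] at ht
      have ht' : (0:ℝ) ≤ t := le_of_lt ht
      rw [(hgderiv t ht').deriv]
      have hSle : deriv S t ≤ -c * S t := by
        have h1 := hS' t ht'
        have h3 : 0 ≤ β * S t * (I t - I 0) :=
          mul_nonneg (mul_nonneg hβ.le (hSnonneg t ht')) (sub_nonneg.mpr (hIge t ht'))
        rw [hc]; nlinarith
      have hexppos := Real.exp_pos (c * t)
      nlinarith [hSnonneg t ht']
  have hSle : ∀ t ≥ (0:ℝ), S t ≤ S 0 * Real.exp (-(c * t)) := by
    intro t ht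
    have := hganti Set.self_mem_Ici ht ht
    simp only [hg, mul_zero, Real.exp_zero, mul_one] at this
    rw [Real.exp_neg, ← div_eq_mul_inv, le_div_iff₀ (Real.exp_pos _)]
    exact this
  -- squeeze
  have hlim : Tendsto (fun t => S 0 * Real.exp (-(c * t))) atTop (nhds 0) := by
    have h1 : Tendsto (fun t : ℝ => Real.exp (-(c * t))) atTop (nhds 0) :=
      Real.tendsto_exp_neg_atTop_nhds_zero.comp (tendsto_id.const_mul_atTop hcpos)
    simpa using h1.const_mul (S 0)
  refine tendsto_of_tendsto_of_tendsto_of_le_of_le' tendsto_const_nhds hlim ?_ ?_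
  · filter_upwards [eventually_ge_atTop (0:ℝ)] with t ht using hSnonneg t ht
  · filter_upwards [eventually_ge_atTop (0:ℝ)] with t ht using hSle t ht
end

section
/- Suppose S(∞,x) = S(0,x) · exp( -∫_Ω (β(x,y)/γ(y)) R(∞,y) dy ) where β(x,y) ≥ β_min > 0, R(∞,y) ≥ 1 - C₃ for some constant C₃ < 1, and S(0,x) ≤ 1. If ∫_Ω 1/γ(y) dy = ∞, then S(∞,x) = 0 for every x, and hence ∫_Ω S(∞,x) dx = 0 (no herd immunity). -/
open Filter Real MeasureTheory ENNReal

/-- Infinite mean recovery time forces S(∞,·) ≡ 0 (no herd immunity),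
with the convention exp(-∞) = 0 encoded via the extended-real integral. -/
theorem no_herd_immunity_of_infinite_mean_recovery_time
    {Ω : Type*} [MeasurableSpace Ω] (μ : Measure Ω) [IsProbabilityMeasure μ]
    (β : Ω → Ω → ℝ) (βmin : ℝ) (hβmin : 0 < βmin)
    (hβ : ∀ x y, βmin ≤ β x y)
    (γ : Ω → ℝ) (hγpos : ∀ y, 0 < γ y) (hγmeas : Measurable γ)
    (hγinf : ∫⁻ y, ENNReal.ofReal (1 / γ y) ∂μ = ⊤)
    (C₃ : ℝ) (hC₃ : C₃ ∈ Set.Ico (0:ℝ) 1)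
    (Rinf : Ω → ℝ) (hRmeas : Measurable Rinf)
    (hRrange : ∀ y, Rinf y ∈ Set.Icc (0:ℝ) 1)
    (hRlb : ∀ᵐ y ∂μ, 1 - C₃ ≤ Rinf y)
    (S0 Sinf : Ω → ℝ) (hS0 : ∀ x, S0 x ∈ Set.Icc (0:ℝ) 1)
    (hSinfMeas : Measurable Sinf)
    (hSinf : ∀ x,
      Sinf x = if (∫⁻ y, ENNReal.ofReal (β x y / γ y * Rinf y) ∂μ) = ⊤ then 0
        else S0 x *
          Real.exp (-(∫⁻ y, ENNReal.ofReal (β x y / γ y * Rinf y) ∂μ).toReal)) :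
    (∀ x, Sinf x = 0) ∧ ∫ x, Sinf x ∂μ = 0 := by
  have hzero : ∀ x, Sinf x = 0 := by
    intro x
    have c : (0:ℝ) < βmin * (1 - C₃) := by
      have := hC₃.2; nlinarith
    have hkey : (∫⁻ y, ENNReal.ofReal (β x y / γ y * Rinf y) ∂μ) = ⊤ := by
      have hle : (∫⁻ y, ENNReal.ofReal (βmin * (1 - C₃)) * ENNReal.ofReal (1 / γ y) ∂μ)
          ≤ ∫⁻ y, ENNReal.ofReal (β x y / γ y * Rinf y) ∂μ := by
        refine lintegral_mono_ae ?_
        filter_upwards [hRlb] with y hy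
        rw [← ENNReal.ofReal_mul c.le]
        apply ENNReal.ofReal_le_ofReal
        have hγ := hγpos y
        have h1 : βmin * (1 - C₃) * (1 / γ y) = βmin / γ y * (1 - C₃) := by ring
        rw [h1]
        have hb := hβ x y
        have hR1 : (1 - C₃) ≤ Rinf y := hy
        have h2 : βmin / γ y ≤ β x y / γ y := by gcongr
        have h3 : 0 ≤ 1 - C₃ := by nlinarith [hC₃.2]
        have h4 : 0 < βmin / γ y := div_pos hβmin hγ
        nlinarith [div_pos (lt_of_lt_of_le hβmin hb) hγ]
      rw [lintegral_const_mul' _ _ ENNReal.ofReal_ne_top, hγinf,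
        ENNReal.mul_top (by simp [c])] at hle
      exact top_le_iff.mp hle
    rw [hSinf x, if_pos hkey]
  refine ⟨hzero, ?_⟩
  simp [funext hzero]
end

section
/- In the heterogeneous SEIR model restricted to the set Z = {x : γ(x) = 0}, with ∂_t(E+I)(t,x) = (1-(E+I)(t,x)) ∫_Ω β(x,y) I(t,y) dy ≥ β_min P(Z) (1-(E+I)(t,x)) I_Z(t) and (d/dt) I_Z(t) ≥ α_min E_Z(t), where E_Z(t) = ∫_Z E(t,x) dx, I_Z(t) = ∫_Z I(t,x) dx, α_min > 0, β_min > 0, P(Z) > 0, and E_Z(0)+I_Z(0) > 0, it follows that I_Z(t) → P(Z)·1 normalized, i.e., (E_Z+I_Z)(t) → P(Z) with E_Z(t) → 0, hence I_Z(t) → P(Z) as t → ∞. -/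
/-!
Since `f' ≥ 0`, `f` is nondecreasing, so `g` is driven towards `PZ f ≥ PZ f(0) > 0` and stays
eventually above some `m > 0`. Then `f' ≥ c m (1 - f)` drives `f` to `1`, after which
`g' ≥ α (PZ f - g)` drives `g` to `PZ`. All three steps are one Grönwall relaxation estimate.
-/

open Filter Set Topology

lemma monotoneOn_Ici_of_deriv_nonneg {f : ℝ → ℝ} {T : ℝ}
    (hf : ∀ t ≥ T, DifferentiableAt ℝ f t) (hf' : ∀ t ≥ T, 0 ≤ deriv f t) :
    MonotoneOn f (Ici T) := by
  refine monotoneOn_of_deriv_nonneg (convex_Ici T)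
    (fun t ht => (hf t ht).continuousAt.continuousWithinAt) ?_ ?_ <;> rw [interior_Ici]
  · exact fun t ht => (hf t ht.le).differentiableWithinAt
  · exact fun t ht => hf' t ht.le

/-- Grönwall applied to `K - g`, which satisfies `(K - g)' ≤ -a (K - g)` and hence decays
like `e^{-a t}`. -/
lemma eventually_lt_of_mul_sub_le_deriv {g : ℝ → ℝ} {a K : ℝ} (ha : 0 < a)
    (hg : ∀ᶠ t in atTop, DifferentiableAt ℝ g t)
    (hg' : ∀ᶠ t in atTop, a * (K - g t) ≤ deriv g t) :
    ∀ K' < K, ∀ᶠ t in atTop, K' < g t := by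
  obtain ⟨T, hT⟩ := eventually_atTop.1 (hg.and hg')
  have decay : ∀ t ≥ T, K - g t ≤ (K - g T) * Real.exp (-a * (t - T)) := by
    intro t ht
    have hderiv : ∀ s ≥ T, HasDerivAt (fun s => K - g s) (-deriv g s) s :=
      fun s hs => ((hT s hs).1.hasDerivAt).const_sub K
    have := le_gronwallBound_of_liminf_deriv_right_le (f' := fun s => -deriv g s)
      (δ := K - g T) (K := -a) (ε := 0) (b := t)
      (fun s hs => (hderiv s hs.1).continuousAt.continuousWithinAt)
      (fun s hs _ hr => (hderiv s hs.1).hasDerivWithinAt.liminf_right_slope_le hr) le_rfl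
      (fun s hs => by linarith [(hT s hs.1).2]) t ⟨ht, le_rfl⟩
    rwa [gronwallBound_ε0] at this
  have hlim : Tendsto (fun t => (K - g T) * Real.exp (-a * (t - T))) atTop (𝓝 0) := by
    have : Tendsto (fun t => -a * (t - T)) atTop atBot :=
      (tendsto_atTop_add_const_right atTop (-T) tendsto_id).const_mul_atTop_of_neg
        (neg_lt_zero.2 ha)
    simpa using (Real.tendsto_exp_atBot.comp this).const_mul (K - g T)
  intro K' hK'
  filter_upwards [hlim.eventually_lt_const (sub_pos.2 hK'), eventually_ge_atTop T] with t h1 h2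
  linarith [decay t h2]

/-- SEIR on the zero-recovery set: the differential inequalities for
f = (E_Z+I_Z)/P(Z) and g = I_Z force f → 1 and g → P(Z). -/
theorem seir_zero_recovery_set_full_infection
    (f g : ℝ → ℝ) (c αmin PZ : ℝ)
    (hc : 0 < c) (hα : 0 < αmin) (hPZ : 0 < PZ)
    (hfdiff : ∀ t ≥ (0:ℝ), DifferentiableAt ℝ f t)
    (hgdiff : ∀ t ≥ (0:ℝ), DifferentiableAt ℝ g t)
    (hfrange : ∀ t ≥ (0:ℝ), f t ∈ Set.Icc (0:ℝ) 1)
    (hgrange : ∀ t ≥ (0:ℝ), 0 ≤ g t ∧ g t ≤ PZ * f t)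
    (hf' : ∀ t ≥ (0:ℝ), c * (1 - f t) * g t ≤ deriv f t)
    (hg' : ∀ t ≥ (0:ℝ), αmin * (PZ * f t - g t) ≤ deriv g t)
    (hf0 : 0 < f 0) :
    Tendsto f atTop (nhds 1) ∧ Tendsto g atTop (nhds PZ) := by
  have hpos : ∀ᶠ t in atTop, (0:ℝ) ≤ t := eventually_ge_atTop 0
  have hf_mono : MonotoneOn f (Ici 0) := monotoneOn_Ici_of_deriv_nonneg hfdiff fun t ht =>
    (mul_nonneg (mul_nonneg hc.le (sub_nonneg.2 (hfrange t ht).2)) (hgrange t ht).1).trans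
      (hf' t ht)
  obtain ⟨m, hm, hm_lt⟩ := exists_between (mul_pos hPZ hf0)
  have hg_ge : ∀ᶠ t in atTop, m < g t := by
    refine eventually_lt_of_mul_sub_le_deriv hα (hpos.mono hgdiff) ?_ m hm_lt
    filter_upwards [hpos] with t ht
    have hft : f 0 ≤ f t := hf_mono self_mem_Ici ht ht
    exact le_trans (by gcongr) (hg' t ht)
  have hf_lim : Tendsto f atTop (𝓝 1) := by
    refine tendsto_order.2 ⟨eventually_lt_of_mul_sub_le_deriv (mul_pos hc hm) (hpos.mono hfdiff)
      ?_, fun b hb => hpos.mono fun t ht => (hfrange t ht).2.trans_lt hb⟩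
    filter_upwards [hpos, hg_ge] with t ht hgt
    calc c * m * (1 - f t) = c * (1 - f t) * m := by ring
      _ ≤ c * (1 - f t) * g t := by
        have := (hfrange t ht).2
        gcongr
      _ ≤ deriv f t := hf' t ht
  refine ⟨hf_lim, tendsto_order.2 ⟨fun b hb => ?_, fun b hb => ?_⟩⟩
  · obtain ⟨K, hbK, hK⟩ := exists_between hb
    refine eventually_lt_of_mul_sub_le_deriv hα (hpos.mono hgdiff) ?_ b hbK
    filter_upwards [hpos, (tendsto_order.1 hf_lim).1 _ ((div_lt_one hPZ).2 hK)] with t ht hft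
    have : K < PZ * f t := by rwa [div_lt_iff₀' hPZ] at hft
    exact le_trans (by gcongr) (hg' t ht)
  · filter_upwards [hpos] with t ht
    nlinarith [(hgrange t ht).2, (hfrange t ht).2]
end
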